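/- arXiv:2307.14560 — 3 statements merged into one kernel-verified Lean document; each statement's English description precedes it below -/
import Mathlib

section
/- Let n ≥ 1 be an integer, let S ⊂ ℝ^{n+1} be a nonempty compact set, and let d < n+1 be a real number such that the upper Minkowski dimension of S is at most d, i.e., for every s > d there is a constant C_s > 0 with N_δ(S) ≤ C_s·δ^{−s} for all δ ∈ (0,1). Then for every real p with 0 < p < (n+1) − d and every bounded Lebesgue-measurable set Ω ⊂ ℝ^{n+1} with Ω ∩ S = ∅, the integral ∫_Ω dist(x,S)^{−p} dV(x) is finite. (This is the content of the inequality 𝔪(S) ≥ (n+1) − dim_M(S) between the Marcinkiewicz exponent and the upper Minkowski dimension.) -/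
open MeasureTheory

/-- If the upper Minkowski dimension of the nonempty compact set
`S ⊂ ℝ^{n+1}` is at most `d < n+1` (expressed via covering-number bounds
`N_δ(S) ≤ C_s δ^{-s}` for every `s > d`), then for every `0 < p < (n+1) - d`
and every bounded measurable `Ω` disjoint from `S`, the integral
`∫_Ω dist(x,S)^{-p} dV` is finite. -/
theorem marcinkiewicz_ge_codim_minkowski
    (n : ℕ) (hn : 1 ≤ n)
    (S : Set (EuclideanSpace ℝ (Fin (n + 1))))
    (hS : IsCompact S) (hSne : S.Nonempty)
    (d : ℝ) (hd : d < (n : ℝ) + 1)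
    (hdim : ∀ s : ℝ, d < s → ∃ C : ℝ, 0 < C ∧
      ∀ δ : ℝ, 0 < δ → δ < 1 →
        ∃ F : Finset (Set (EuclideanSpace ℝ (Fin (n + 1)))),
          S ⊆ ⋃₀ (F : Set (Set (EuclideanSpace ℝ (Fin (n + 1))))) ∧
          (∀ U ∈ F, EMetric.diam U ≤ ENNReal.ofReal δ) ∧
          (F.card : ℝ) ≤ C * δ ^ (-s)) :
    ∀ p : ℝ, 0 < p → p < (n : ℝ) + 1 - d →
      ∀ Ω : Set (EuclideanSpace ℝ (Fin (n + 1))),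
        MeasurableSet Ω → Bornology.IsBounded Ω → Ω ∩ S = ∅ →
        IntegrableOn (fun x => Metric.infDist x S ^ (-p)) Ω volume := by
  classical
  intro p hp hpd Ω hΩm hΩb hΩS
  have hSclosed : IsClosed S := hS.isClosed
  -- choose an auxiliary exponent `s` with `d < s` and `p < n+1-s`
  set s : ℝ := ((n : ℝ) + 1 - p + d) / 2 with hs_def
  have hds : d < s := by rw [hs_def]; linarith
  have hq : 0 < (n : ℝ) + 1 - s - p := by rw [hs_def]; linarith
  obtain ⟨C, hC, hcov⟩ := hdim s hds
  -- constants
  set v : ENNReal := volume (Metric.ball (0 : EuclideanSpace ℝ (Fin (n + 1))) 1) with hv_def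
  have hvlt : v < ⊤ := measure_ball_lt_top
  set V : ℝ := v.toReal with hV_def
  have hV0 : 0 ≤ V := ENNReal.toReal_nonneg
  have hvV : v = ENNReal.ofReal V := (ENNReal.ofReal_toReal hvlt.ne).symm
  set K : ℝ := C * 3 ^ (n + 1) * V with hK_def
  have hK0 : 0 ≤ K := by positivity
  -- Step 1 : volume bound for distance neighborhoods of S
  have hvol : ∀ δ : ℝ, 0 < δ → δ < 1 →
      volume {x : EuclideanSpace ℝ (Fin (n + 1)) | Metric.infDist x S ≤ δ}
        ≤ ENNReal.ofReal (K * δ ^ ((n : ℝ) + 1 - s)) := by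
    intro δ hδ0 hδ1
    obtain ⟨F, hFcov, hFdiam, hFcard⟩ := hcov δ hδ0 hδ1
    set c : Set (EuclideanSpace ℝ (Fin (n + 1))) → EuclideanSpace ℝ (Fin (n + 1)) :=
      fun U => if h : (U ∩ S).Nonempty then h.some else hSne.some with hc_def
    have hsub : {x : EuclideanSpace ℝ (Fin (n + 1)) | Metric.infDist x S ≤ δ} ⊆
        ⋃ U ∈ F, Metric.closedBall (c U) (3 * δ) := by
      intro x hx
      have hx' : Metric.infDist x S < 2 * δ := lt_of_le_of_lt hx (by linarith)
      obtain ⟨y, hyS, hxy⟩ := (Metric.infDist_lt_iff hSne).1 hx'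
      obtain ⟨U, hUF, hyU⟩ := hFcov hyS
      have hUF' : U ∈ F := hUF
      have hne : (U ∩ S).Nonempty := ⟨y, hyU, hyS⟩
      have hcU : c U ∈ U ∩ S := by
        rw [hc_def]; simp only [dif_pos hne]; exact hne.some_mem
      have hdy : dist y (c U) ≤ δ := by
        have h1 : edist y (c U) ≤ ENNReal.ofReal δ :=
          le_trans (EMetric.edist_le_diam_of_mem hyU hcU.1) (hFdiam U hUF')
        rw [edist_dist] at h1
        exact (ENNReal.ofReal_le_ofReal_iff hδ0.le).1 h1
      refine Set.mem_biUnion hUF' ?_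
      rw [Metric.mem_closedBall]
      calc dist x (c U) ≤ dist x y + dist y (c U) := dist_triangle _ _ _
        _ ≤ 2 * δ + δ := add_le_add hxy.le hdy
        _ = 3 * δ := by ring
    have hcard' : (F.card : ENNReal) ≤ ENNReal.ofReal (C * δ ^ (-s)) := by
      rw [← ENNReal.ofReal_natCast]
      exact ENNReal.ofReal_le_ofReal hFcard
    have hreal : C * δ ^ (-s) * ((3 * δ) ^ (n + 1) * V) = K * δ ^ ((n : ℝ) + 1 - s) := by
      have e1 : δ ^ (-s) * δ ^ ((n : ℝ) + 1) = δ ^ ((n : ℝ) + 1 - s) := by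
        rw [← Real.rpow_add hδ0]; congr 1; ring
      have e2 : δ ^ (((n + 1 : ℕ) : ℝ)) = δ ^ ((n : ℝ) + 1) := by
        congr 1; push_cast; ring
      calc C * δ ^ (-s) * ((3 * δ) ^ (n + 1) * V)
          = C * 3 ^ (n + 1) * V * (δ ^ (-s) * δ ^ (n + 1)) := by rw [mul_pow]; ring
        _ = C * 3 ^ (n + 1) * V * δ ^ ((n : ℝ) + 1 - s) := by
            rw [← Real.rpow_natCast δ (n + 1), e2, e1]
        _ = K * δ ^ ((n : ℝ) + 1 - s) := by rw [hK_def]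
    calc volume {x : EuclideanSpace ℝ (Fin (n + 1)) | Metric.infDist x S ≤ δ}
        ≤ volume (⋃ U ∈ F, Metric.closedBall (c U) (3 * δ)) := measure_mono hsub
      _ ≤ ∑ U ∈ F, volume (Metric.closedBall (c U) (3 * δ)) :=
          measure_biUnion_finset_le F _
      _ = ∑ U ∈ F, ENNReal.ofReal ((3 * δ) ^ (n + 1)) * v := by
          refine Finset.sum_congr rfl fun U _ => ?_
          rw [Measure.addHaar_closedBall volume (c U) (by positivity)]
          rw [finrank_euclideanSpace_fin]
      _ = (F.card : ENNReal) * (ENNReal.ofReal ((3 * δ) ^ (n + 1)) * v) := by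
          rw [Finset.sum_const, nsmul_eq_mul]
      _ ≤ ENNReal.ofReal (C * δ ^ (-s)) * (ENNReal.ofReal ((3 * δ) ^ (n + 1)) * v) :=
          mul_le_mul_left hcard' _
      _ = ENNReal.ofReal (K * δ ^ ((n : ℝ) + 1 - s)) := by
          rw [hvV, ← ENNReal.ofReal_mul (by positivity), ← ENNReal.ofReal_mul (by positivity),
            hreal]
  -- positivity of the distance on Ω
  have hdistpos : ∀ x ∈ Ω, 0 < Metric.infDist x S := by
    intro x hx
    have hxS : x ∉ S := fun hxS => Set.eq_empty_iff_forall_notMem.1 hΩS x ⟨hx, hxS⟩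
    exact (hSclosed.notMem_iff_infDist_pos hSne).1 hxS
  -- dyadic decomposition
  set b : ℝ := 1 / 2 with hb_def
  have hb0 : 0 < b := by norm_num [hb_def]
  have hb1 : b < 1 := by norm_num [hb_def]
  set a : ℕ → ℝ := fun k => b ^ (k + 1) with ha_def
  have ha0 : ∀ k, 0 < a k := fun k => pow_pos hb0 _
  have ha1 : ∀ k, a k < 1 := fun k => pow_lt_one₀ hb0.le hb1 (Nat.succ_ne_zero k)
  set T : ℕ → Set (EuclideanSpace ℝ (Fin (n + 1))) :=
    fun k => Ω ∩ {x | a (k + 1) ≤ Metric.infDist x S ∧ Metric.infDist x S ≤ a k} with hT_def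
  set Ω₂ : Set (EuclideanSpace ℝ (Fin (n + 1))) :=
    Ω ∩ {x | a 0 ≤ Metric.infDist x S} with hΩ₂_def
  have hcover : Ω ⊆ Ω₂ ∪ ⋃ k, T k := by
    intro x hx
    set d0 : ℝ := Metric.infDist x S with hd0_def
    have hd0 : 0 < d0 := hdistpos x hx
    by_cases hca : a 0 ≤ d0
    · exact Or.inl ⟨hx, hca⟩
    · push_neg at hca
      have hex : ∃ m : ℕ, a (m + 1) ≤ d0 := by
        obtain ⟨m, hm⟩ := exists_pow_lt_of_lt_one hd0 hb1
        exact ⟨m, le_of_lt (lt_of_le_of_lt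
          (pow_le_pow_of_le_one hb0.le hb1.le (by omega)) hm)⟩
      set k : ℕ := Nat.find hex with hk_def
      have hk1 : a (k + 1) ≤ d0 := Nat.find_spec hex
      have hk2 : d0 ≤ a k := by
        rcases Nat.eq_zero_or_pos k with h0 | hpos
        · rw [h0]; exact hca.le
        · have := Nat.find_min hex (m := k - 1) (by omega)
          push_neg at this
          have hkk : k - 1 + 1 = k := by omega
          rw [hkk] at this
          exact this.le
      exact Or.inr (Set.mem_iUnion.2 ⟨k, hx, hk1, hk2⟩)
  -- rpow of powers of b
  have hbpow : ∀ (m : ℕ) (r : ℝ), ((b ^ m : ℝ)) ^ r = (b ^ r) ^ m := by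
    intro m r
    rw [← Real.rpow_natCast b m, ← Real.rpow_mul hb0.le, mul_comm (m : ℝ) r,
      Real.rpow_mul hb0.le, Real.rpow_natCast]
  -- geometric ratio
  set ρ : ℝ := b ^ (-p) * b ^ ((n : ℝ) + 1 - s) with hρ_def
  have hρ0 : 0 ≤ ρ := by positivity
  have hρ1 : ρ < 1 := by
    rw [hρ_def, ← Real.rpow_add hb0]
    exact Real.rpow_lt_one hb0.le hb1 (by linarith)
  set M : ℝ := K * (b ^ (-p)) ^ 2 * b ^ ((n : ℝ) + 1 - s) with hM_def
  have hM0 : 0 ≤ M := by positivity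
  -- the integrand and its nonnegativity
  have hfnonneg : ∀ x : EuclideanSpace ℝ (Fin (n + 1)),
      0 ≤ Metric.infDist x S ^ (-p) := fun x => Real.rpow_nonneg Metric.infDist_nonneg _
  constructor
  · -- a.e. strong measurability
    have hmeas : Measurable fun x : EuclideanSpace ℝ (Fin (n + 1)) =>
        Real.exp (Real.log (Metric.infDist x S) * (-p)) :=
      Real.measurable_exp.comp
        ((Real.measurable_log.comp (Metric.continuous_infDist_pt S).measurable).mul
          measurable_const)
    refine (hmeas.aestronglyMeasurable).congr ?_
    rw [Filter.EventuallyEq, ae_restrict_iff' hΩm]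
    refine Filter.Eventually.of_forall fun x hx => ?_
    rw [Real.rpow_def_of_pos (hdistpos x hx)]
  · -- finiteness of the integral
    rw [hasFiniteIntegral_iff_norm]
    have hnorm : ∀ x : EuclideanSpace ℝ (Fin (n + 1)),
        ENNReal.ofReal ‖Metric.infDist x S ^ (-p)‖
          = ENNReal.ofReal (Metric.infDist x S ^ (-p)) := by
      intro x; rw [Real.norm_of_nonneg (hfnonneg x)]
    calc ∫⁻ x in Ω, ENNReal.ofReal ‖Metric.infDist x S ^ (-p)‖
        = ∫⁻ x in Ω, ENNReal.ofReal (Metric.infDist x S ^ (-p)) :=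
          lintegral_congr fun x => hnorm x
      _ ≤ ∫⁻ x in Ω₂ ∪ ⋃ k, T k, ENNReal.ofReal (Metric.infDist x S ^ (-p)) :=
          lintegral_mono_set hcover
      _ ≤ (∫⁻ x in Ω₂, ENNReal.ofReal (Metric.infDist x S ^ (-p)))
            + ∫⁻ x in ⋃ k, T k, ENNReal.ofReal (Metric.infDist x S ^ (-p)) :=
          lintegral_union_le _ _ _
      _ ≤ ENNReal.ofReal (b ^ (-p)) * volume Ω
            + ∑' k, ENNReal.ofReal (M * ρ ^ k) := by
          gcongr
          · -- the part far from S
            calc ∫⁻ x in Ω₂, ENNReal.ofReal (Metric.infDist x S ^ (-p))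
                ≤ ∫⁻ _ in Ω₂, ENNReal.ofReal (b ^ (-p)) := by
                  refine setLIntegral_mono measurable_const fun x hx => ?_
                  refine ENNReal.ofReal_le_ofReal ?_
                  have hbx : b ≤ Metric.infDist x S := by
                    have := hx.2
                    simpa [ha_def, pow_one] using this
                  exact Real.rpow_le_rpow_of_nonpos hb0 hbx (by linarith)
              _ = ENNReal.ofReal (b ^ (-p)) * volume Ω₂ := setLIntegral_const _ _
              _ ≤ ENNReal.ofReal (b ^ (-p)) * volume Ω :=
                  mul_le_mul_right (measure_mono Set.inter_subset_left) _
          · -- the dyadic shells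
            refine le_trans (lintegral_iUnion_le _ _) (ENNReal.tsum_le_tsum fun k => ?_)
            have hstep : ∫⁻ x in T k, ENNReal.ofReal (Metric.infDist x S ^ (-p))
                ≤ ENNReal.ofReal ((b ^ (-p)) ^ (k + 2)) * volume (T k) := by
              refine le_trans (setLIntegral_mono measurable_const fun x hx => ?_)
                (le_of_eq (setLIntegral_const _ _))
              refine ENNReal.ofReal_le_ofReal ?_
              have hbx : b ^ (k + 2) ≤ Metric.infDist x S := hx.2.1
              have h1 : Metric.infDist x S ^ (-p) ≤ (b ^ (k + 2) : ℝ) ^ (-p) :=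
                Real.rpow_le_rpow_of_nonpos (pow_pos hb0 _) hbx (by linarith)
              rw [hbpow (k + 2) (-p)] at h1
              exact h1
            have hTvol : volume (T k) ≤ ENNReal.ofReal (K * (b ^ ((n : ℝ) + 1 - s)) ^ (k + 1)) := by
              have hTsub : T k ⊆ {x : EuclideanSpace ℝ (Fin (n + 1)) |
                  Metric.infDist x S ≤ a k} := fun x hx => hx.2.2
              refine le_trans (measure_mono hTsub) ?_
              have := hvol (a k) (ha0 k) (ha1 k)
              rwa [ha_def, hbpow (k + 1) ((n : ℝ) + 1 - s)] at this
            calc ∫⁻ x in T k, ENNReal.ofReal (Metric.infDist x S ^ (-p))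
                ≤ ENNReal.ofReal ((b ^ (-p)) ^ (k + 2))
                    * ENNReal.ofReal (K * (b ^ ((n : ℝ) + 1 - s)) ^ (k + 1)) :=
                  le_trans hstep (mul_le_mul_right hTvol _)
              _ = ENNReal.ofReal (M * ρ ^ k) := by
                  rw [← ENNReal.ofReal_mul (by positivity)]
                  congr 1
                  rw [hM_def, hρ_def]
                  ring
      _ < ⊤ := by
          refine ENNReal.add_lt_top.2 ⟨?_, ?_⟩
          · exact ENNReal.mul_lt_top ENNReal.ofReal_lt_top hΩb.measure_lt_top
          · have hsum : ∑' k, ENNReal.ofReal (M * ρ ^ k)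
                = ENNReal.ofReal M * (1 - ENNReal.ofReal ρ)⁻¹ := by
              have : ∀ k : ℕ, ENNReal.ofReal (M * ρ ^ k)
                  = ENNReal.ofReal M * (ENNReal.ofReal ρ) ^ k := by
                intro k
                rw [ENNReal.ofReal_mul hM0, ENNReal.ofReal_pow hρ0]
              rw [tsum_congr this, ENNReal.tsum_mul_left, ENNReal.tsum_geometric]
            rw [hsum]
            refine ENNReal.mul_lt_top ENNReal.ofReal_lt_top ?_
            rw [ENNReal.inv_lt_top]
            exact tsub_pos_of_lt (ENNReal.ofReal_lt_one.2 hρ1)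
end

section
/- Let n ≥ 1 be an integer, let Ω ⊂ ℝ^{n+1} be a bounded measurable set, let p > n+1 be real, and let u : ℝ^{n+1} → ℝ be measurable with ∫_Ω |u|^p dV < ∞. Then: (1) for every x ∈ ℝ^{n+1} the function y ↦ ‖y − x‖^{−n}·|u(y)| is integrable over Ω, so that Tu(x) = ∫_Ω ((y − x)/‖y − x‖^{n+1})·u(y) dV(y) is well defined for every x ∈ ℝ^{n+1}; and (2) Tu(x) → 0 as ‖x‖ → ∞ (i.e., Tu tends to 0 along the cobounded filter). -/
/-!
Since `‖y - x‖ ^ (-n * q)` is locally integrable in dimension `n + 1` exactly when `n * q < n + 1`,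
i.e. when the conjugate exponent `p` of `q` exceeds `n + 1`, Hölder's inequality gives
`|u| / ‖· - x‖ ^ n ∈ L¹(Ω)`. For decay, `Ω ⊆ B(0, R)` gives `‖y - x‖ ≥ ‖x‖ - R` on `Ω`, so
`‖Tu(x)‖ ≤ ‖u‖_{L¹(Ω)} / (‖x‖ - R) ^ n → 0`.
-/

open MeasureTheory Filter Metric Bornology Topology Module

section Decay

variable {E : Type*} [NormedAddCommGroup E] [NormedSpace ℝ E]

lemma norm_div_norm_pow_succ_smul_le (c : ℝ) {v : E} (k : ℕ) {r : ℝ} (hr : 0 < r)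
    (hv : r ≤ ‖v‖) : ‖(c / ‖v‖ ^ (k + 1)) • v‖ ≤ |c| / r ^ k := by
  have hv0 : 0 < ‖v‖ := hr.trans_le hv
  calc ‖(c / ‖v‖ ^ (k + 1)) • v‖ = |c| / ‖v‖ ^ k := by
        rw [norm_smul, norm_div, norm_pow, norm_norm, Real.norm_eq_abs, pow_succ]
        field_simp
    _ ≤ |c| / r ^ k := by gcongr

variable [MeasurableSpace E] [OpensMeasurableSpace E] {μ : Measure E}

theorem tendsto_setIntegral_div_norm_pow_succ_smul_cobounded {s : Set E} (hs : IsBounded s)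
    {g : E → ℝ} (hg : IntegrableOn g s μ) {k : ℕ} (hk : k ≠ 0) :
    Tendsto (fun x => ∫ y in s, (g y / ‖y - x‖ ^ (k + 1)) • (y - x) ∂μ) (cobounded E) (𝓝 0) := by
  obtain ⟨R, hR⟩ := hs.subset_closedBall 0
  have hbound : Tendsto (fun x : E => (∫ y in s, |g y| ∂μ) / (‖x‖ - R) ^ k) (cobounded E)
      (𝓝 0) :=
    tendsto_const_nhds.div_atTop <| (tendsto_pow_atTop hk).comp <|
      tendsto_atTop_add_const_right _ (-R) tendsto_norm_cobounded_atTop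
  refine squeeze_zero_norm' ?_ hbound
  filter_upwards [tendsto_norm_cobounded_atTop.eventually_gt_atTop R] with x hx
  rw [← integral_div]
  refine norm_integral_le_of_norm_le (hg.abs.div_const _) <|
    ae_restrict_of_ae_restrict_of_subset hR <|
      ae_restrict_of_forall_mem measurableSet_closedBall fun y hy => ?_
  refine norm_div_norm_pow_succ_smul_le _ _ (sub_pos.2 hx) ?_
  rw [norm_sub_rev]
  linarith [norm_sub_norm_le x y, mem_closedBall_zero_iff.1 hy]

end Decay

section Kernel

variable {E : Type*} [NormedAddCommGroup E] [NormedSpace ℝ E] [FiniteDimensional ℝ E]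
  [MeasurableSpace E] [BorelSpace E] {μ : Measure E} [μ.IsAddHaarMeasure]

theorem integrableOn_norm_sub_rpow_neg (x : E) {s : Set E} (hs : IsBounded s) {α : ℝ}
    (hα0 : 0 ≤ α) (hα : α < finrank ℝ E) :
    IntegrableOn (fun y => ‖y - x‖ ^ (-α)) s μ := by
  obtain ⟨r, hr⟩ := hs.subset_ball x
  have hd : 1 ≤ finrank ℝ E := by exact_mod_cast hα0.trans_lt hα
  have h0 : IntegrableOn (fun y : E => ‖y‖ ^ (-α)) (ball 0 r) μ :=
    integrableOn_ball_of_norm_le_rpow (C := 1) hd hα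
      (ae_of_all _ fun y => by simp [abs_of_nonneg (Real.rpow_nonneg (norm_nonneg y) _)])
      (measurable_norm.pow_const _).aestronglyMeasurable
  refine (((measurePreserving_sub_right μ x).integrableOn_comp_preimage
    (measurableEmbedding_subRight x)).2 h0).mono_set fun y hy => ?_
  simpa [dist_eq_norm] using hr hy

theorem memLp_inv_norm_sub_pow (x : E) {s : Set E} (hs : IsBounded s) {k : ℕ} {q : ℝ}
    (hq : 0 < q) (hkq : k * q < finrank ℝ E) :
    MemLp (fun y => (‖y - x‖ ^ k)⁻¹) (ENNReal.ofReal q) (μ.restrict s) := by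
  rw [← integrable_norm_rpow_iff (by fun_prop) (by simpa using hq) ENNReal.ofReal_ne_top,
    ENNReal.toReal_ofReal hq.le]
  refine (integrableOn_norm_sub_rpow_neg x hs (by positivity) hkq).congr (ae_of_all _ fun y => ?_)
  dsimp only
  rw [norm_inv, norm_pow, norm_norm, Real.inv_rpow (by positivity), ← Real.rpow_natCast,
    ← Real.rpow_mul (norm_nonneg _), Real.rpow_neg (norm_nonneg _)]

theorem MeasureTheory.MemLp.integrableOn_abs_div_norm_sub_pow {s : Set E} (hs : IsBounded s)
    {f : E → ℝ} {p q : ℝ} (hf : MemLp f (ENNReal.ofReal p) (μ.restrict s))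
    (hpq : p.HolderConjugate q) {k : ℕ} (hkq : k * q < finrank ℝ E) (x : E) :
    IntegrableOn (fun y => |f y| / ‖y - x‖ ^ k) s μ := by
  have := hpq.ennrealOfReal
  refine (hf.integrable_mul (memLp_inv_norm_sub_pow x hs hpq.symm.pos hkq)).abs.congr
    (ae_of_all _ fun y => ?_)
  simp [abs_mul, div_eq_mul_inv]

end Kernel

theorem teodorescu_exists_and_decays_general
    (n : ℕ) (hn : 1 ≤ n)
    (Ω : Set (EuclideanSpace ℝ (Fin (n + 1))))
    (hΩb : Bornology.IsBounded Ω)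
    (p : ℝ) (hp : (n : ℝ) + 1 < p)
    (u : EuclideanSpace ℝ (Fin (n + 1)) → ℝ) (hu : Measurable u)
    (hLp : IntegrableOn (fun z => |u z| ^ p) Ω volume) :
    (∀ x : EuclideanSpace ℝ (Fin (n + 1)),
      IntegrableOn (fun y => |u y| / ‖y - x‖ ^ n) Ω volume) ∧
    Filter.Tendsto
      (fun x : EuclideanSpace ℝ (Fin (n + 1)) =>
        ∫ y in Ω, (u y / ‖y - x‖ ^ (n + 1)) • (y - x))
      (Bornology.cobounded (EuclideanSpace ℝ (Fin (n + 1)))) (nhds 0) := by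
  have hp1 : 1 < p := by linarith [n.cast_nonneg (α := ℝ)]
  have hpq := Real.HolderConjugate.conjExponent hp1
  have hnq : n * p.conjExponent < finrank ℝ (EuclideanSpace ℝ (Fin (n + 1))) := by
    rw [finrank_euclideanSpace_fin, Real.conjExponent, ← mul_div_assoc,
      div_lt_iff₀ (by linarith)]
    push_cast
    nlinarith
  have hu_p : MemLp u (ENNReal.ofReal p) (volume.restrict Ω) := by
    rw [← integrable_norm_rpow_iff hu.aestronglyMeasurable (ENNReal.ofReal_pos.2 (by linarith)).ne'
      ENNReal.ofReal_ne_top, ENNReal.toReal_ofReal (by linarith)]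
    simp only [Real.norm_eq_abs]
    exact hLp
  have : IsFiniteMeasure (volume.restrict Ω) := isFiniteMeasure_restrict.2 hΩb.measure_lt_top.ne
  exact ⟨hu_p.integrableOn_abs_div_norm_sub_pow hΩb hpq hnq,
    tendsto_setIntegral_div_norm_pow_succ_smul_cobounded hΩb
      (hu_p.integrable (ENNReal.one_le_ofReal.2 hp1.le)) (by omega)⟩

/-- Existence and decay of the (componentwise, real-density)
Teodorescu transform: if `u ∈ L^p(Ω)` with `p > n+1` and `Ω` bounded, then
(1) the kernel `y ↦ ‖y-x‖^{-n} |u(y)|` is integrable on `Ω` for every `x`,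
so `Tu(x) = ∫_Ω ((y-x)/‖y-x‖^{n+1}) u(y) dV(y)` is well defined everywhere,
and (2) `Tu(x) → 0` as `‖x‖ → ∞`. -/
theorem teodorescu_exists_and_decays
    (n : ℕ) (hn : 1 ≤ n)
    (Ω : Set (EuclideanSpace ℝ (Fin (n + 1))))
    (hΩm : MeasurableSet Ω) (hΩb : Bornology.IsBounded Ω)
    (p : ℝ) (hp : (n : ℝ) + 1 < p)
    (u : EuclideanSpace ℝ (Fin (n + 1)) → ℝ) (hu : Measurable u)
    (hLp : IntegrableOn (fun z => |u z| ^ p) Ω volume) :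
    (∀ x : EuclideanSpace ℝ (Fin (n + 1)),
      IntegrableOn (fun y => |u y| / ‖y - x‖ ^ n) Ω volume) ∧
    Filter.Tendsto
      (fun x : EuclideanSpace ℝ (Fin (n + 1)) =>
        ∫ y in Ω, (u y / ‖y - x‖ ^ (n + 1)) • (y - x))
      (Bornology.cobounded (EuclideanSpace ℝ (Fin (n + 1)))) (nhds 0) :=
  teodorescu_exists_and_decays_general n hn Ω hΩb p hp u hu hLp
end

section
/- Fix an integer n ≥ 1 and reals α ≥ 1, β ≥ n, and let S_{α,β} = ∂T_{α,β} ⊂ ℝ^{n+1} be as in the construction below. Then there exist constants a, c > 0 such that for every integer k ≥ 1, the set S_{α,β} can be covered by at most (a·k + c)·2^{(n+1)kβ/(β+1)} sets of diameter at most 2^{−k}. -/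
open MeasureTheory Set

/-- The spacing `a_m = 2^{-m-⌊mβ⌋}` of the construction. -/
noncomputable def fractalSpacing (β : ℝ) (m : ℕ) : ℝ :=
  (2 : ℝ) ^ (-(m : ℝ) - (⌊(m : ℝ) * β⌋ : ℝ))

/-- The right endpoints `y_{mj} = 2^{-m} + j·a_m`. -/
noncomputable def fractalPoint (β : ℝ) (m j : ℕ) : ℝ :=
  (2 : ℝ) ^ (-(m : ℝ)) + (j : ℝ) * fractalSpacing β m

/-- The rectangles `R_{mj} = [y_{mj} - C_m, y_{mj}] × [0, 2^{-m}]^n` with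
`C_m = a_m^α / 2`. -/
noncomputable def fractalRect (n : ℕ) (α β : ℝ) (m j : ℕ) :
    Set (EuclideanSpace ℝ (Fin (n + 1))) :=
  {x | x 0 ∈ Icc (fractalPoint β m j - (fractalSpacing β m) ^ α / 2) (fractalPoint β m j) ∧
       ∀ i : Fin (n + 1), i ≠ 0 → x i ∈ Icc (0 : ℝ) ((2 : ℝ) ^ (-(m : ℝ)))}

/-- The base cube `Q = [0,1]^n × [-1,0]` (last coordinate in `[-1,0]`). -/
def fractalBase (n : ℕ) : Set (EuclideanSpace ℝ (Fin (n + 1))) :=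
  {x | (∀ i : Fin (n + 1), (i : ℕ) < n → x i ∈ Icc (0 : ℝ) 1) ∧
       x (Fin.last n) ∈ Icc (-1 : ℝ) 0}

/-- The fractal domain `T_{α,β} = Q ∪ ⋃_{m≥1} ⋃_{j=1}^{2^{⌊mβ⌋}} R_{mj}`. -/
noncomputable def fractalDomain (n : ℕ) (α β : ℝ) :
    Set (EuclideanSpace ℝ (Fin (n + 1))) :=
  fractalBase n ∪
    ⋃ (m : ℕ) (_ : 1 ≤ m) (j : ℕ) (_ : 1 ≤ j) (_ : j ≤ 2 ^ (⌊(m : ℝ) * β⌋.toNat)),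
      fractalRect n α β m j

open scoped ENNReal

/-!
The frontier of `T_{α,β}` lies in the faces of `Q`, the faces of the teeth `R_{mj}` of the
generations `m < M`, and one box of side `≈ 2^{-M}` containing all later teeth. Cut everything
into cubes of side `2^{-k}/√(n+1)`: the faces of `Q` need `≈ 2^{kn}` cubes, generation `m`
(`2^{⌊mβ⌋}` teeth of side `≤ 2^{-m}`) needs `≈ 2^{mβ + (k-m)n}`, and the box `≈ 2^{(n+1)(k-M)}`.
For `M ≈ k/(β+1)` and `β ≥ n` each of these is `O(2^{(n+1)kβ/(β+1)})`, and there are at most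
`k` generations below `M`.
-/

def DiamCoverable {X : Type*} [PseudoEMetricSpace X] (s : Set X) (ε : ℝ≥0∞) (N : ℝ) : Prop :=
  ∃ F : Finset (Set X), s ⊆ ⋃₀ (F : Set (Set X)) ∧ (∀ U ∈ F, Metric.ediam U ≤ ε) ∧
    (F.card : ℝ) ≤ N

namespace DiamCoverable

variable {X : Type*} [PseudoEMetricSpace X] {s t : Set X} {ε ε' : ℝ≥0∞} {N N' : ℝ}

theorem mono (hts : t ⊆ s) (hε : ε ≤ ε') (hN : N ≤ N') (h : DiamCoverable s ε N) :
    DiamCoverable t ε' N' := by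
  obtain ⟨F, hcover, hdiam, hcard⟩ := h
  exact ⟨F, hts.trans hcover, fun U hU => (hdiam U hU).trans hε, hcard.trans hN⟩

theorem union (hs : DiamCoverable s ε N) (ht : DiamCoverable t ε N') :
    DiamCoverable (s ∪ t) ε (N + N') := by
  classical
  obtain ⟨F, hFcover, hFdiam, hFcard⟩ := hs
  obtain ⟨G, hGcover, hGdiam, hGcard⟩ := ht
  refine ⟨F ∪ G, ?_, fun U hU => ?_, ?_⟩
  · rw [Finset.coe_union, sUnion_union]
    exact union_subset_union hFcover hGcover
  · rcases Finset.mem_union.1 hU with hU | hU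
    exacts [hFdiam U hU, hGdiam U hU]
  · calc ((F ∪ G).card : ℝ) ≤ F.card + G.card := by exact_mod_cast Finset.card_union_le F G
      _ ≤ N + N' := add_le_add hFcard hGcard

theorem empty : DiamCoverable (∅ : Set X) ε 0 := ⟨∅, by simp, by simp, by simp⟩

theorem biUnion {ι : Type*} (I : Finset ι) {f : ι → Set X} {N : ι → ℝ}
    (h : ∀ i ∈ I, DiamCoverable (f i) ε (N i)) :
    DiamCoverable (⋃ i ∈ I, f i) ε (∑ i ∈ I, N i) := by
  classical
  induction I using Finset.induction_on with
  | empty => simpa using empty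
  | insert a I ha ih =>
    rw [Finset.sum_insert ha, Finset.set_biUnion_insert]
    exact (h a (Finset.mem_insert_self a I)).union
      (ih fun i hi => h i (Finset.mem_insert_of_mem hi))

end DiamCoverable

section Box

variable {ι : Type*}

def box (c b : ι → ℝ) : Set (EuclideanSpace ℝ ι) := {x | ∀ i, x i ∈ Icc (c i) (b i)}

def boxFaces [DecidableEq ι] (c b : ι → ℝ) : Set (EuclideanSpace ℝ ι) :=
  ⋃ i, (box c (Function.update b i (c i)) ∪ box (Function.update c i (b i)) b)

theorem isClosed_box (c b : ι → ℝ) : IsClosed (box c b) := by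
  simp only [box, Set.ofPred_forall]
  exact isClosed_iInter fun i => isClosed_Icc.preimage (PiLp.continuous_apply 2 _ i)

theorem isOpen_setOf_forall_mem_Ioo [Finite ι] (c b : ι → ℝ) :
    IsOpen {x : EuclideanSpace ℝ ι | ∀ i, x i ∈ Ioo (c i) (b i)} := by
  simp only [Set.ofPred_forall]
  exact isOpen_iInter_of_finite fun i => isOpen_Ioo.preimage (PiLp.continuous_apply 2 _ i)

theorem box_diff_interior_subset_boxFaces [Finite ι] [DecidableEq ι] {c b : ι → ℝ}
    {T : Set (EuclideanSpace ℝ ι)} (hT : box c b ⊆ T) :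
    box c b \ interior T ⊆ boxFaces c b := by
  rintro x ⟨hx, hxT⟩
  by_contra hfaces
  have hopen : ∀ i, x i ∈ Ioo (c i) (b i) := by
    intro i
    refine ⟨(hx i).1.lt_of_ne fun h => hfaces ?_, (hx i).2.lt_of_ne fun h => hfaces ?_⟩
    · refine mem_iUnion.2 ⟨i, Or.inl fun i' => ?_⟩
      rcases eq_or_ne i' i with rfl | hi'
      · simp [← h]
      · simpa [hi'] using hx i'
    · refine mem_iUnion.2 ⟨i, Or.inr fun i' => ?_⟩
      rcases eq_or_ne i' i with rfl | hi'
      · simp [h]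
      · simpa [hi'] using hx i'
  have hsub : {y : EuclideanSpace ℝ ι | ∀ i, y i ∈ Ioo (c i) (b i)} ⊆ T :=
    fun y hy => hT fun i => Ioo_subset_Icc_self (hy i)
  exact hxT <| interior_maximal hsub (isOpen_setOf_forall_mem_Ioo c b) hopen

theorem ediam_box_le [Fintype ι] {c b : ι → ℝ} {δ : ℝ} (hδ : 0 ≤ δ) (h : ∀ i, b i - c i ≤ δ) :
    Metric.ediam (box c b) ≤ ENNReal.ofReal (δ * √(Fintype.card ι)) := by
  refine Metric.ediam_le fun x hx y hy => ?_
  rw [edist_dist]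
  refine ENNReal.ofReal_le_ofReal ?_
  have hcoord : ∀ i, dist (x i) (y i) ^ 2 ≤ δ ^ 2 := fun i => by
    refine pow_le_pow_left₀ dist_nonneg ?_ 2
    rw [Real.dist_eq, abs_sub_le_iff]
    constructor <;> linarith [(hx i).1, (hx i).2, (hy i).1, (hy i).2, h i]
  calc dist x y = √(∑ i, dist (x i) (y i) ^ 2) := EuclideanSpace.dist_eq x y
    _ ≤ √(∑ _i : ι, δ ^ 2) := Real.sqrt_le_sqrt (Finset.sum_le_sum fun i _ => hcoord i)
    _ = δ * √(Fintype.card ι) := by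
      rw [Finset.sum_const, Finset.card_univ, nsmul_eq_mul, Real.sqrt_mul' _ (sq_nonneg δ),
        Real.sqrt_sq hδ, mul_comm]

theorem box_diamCoverable [Fintype ι] {c b : ι → ℝ} (hcb : c ≤ b) {δ : ℝ} (hδ : 0 < δ) :
    DiamCoverable (box c b) (ENNReal.ofReal (δ * √(Fintype.card ι)))
      (∏ i, ((b i - c i) / δ + 1)) := by
  classical
  let cube : (ι → ℕ) → Set (EuclideanSpace ℝ ι) := fun v =>
    box (fun i => c i + v i * δ) (fun i => c i + v i * δ + δ)
  refine ⟨(Fintype.piFinset fun i => Finset.range (⌊(b i - c i) / δ⌋₊ + 1)).image cube,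
    fun x hx => ?_, ?_, ?_⟩
  · have hquot : ∀ i, 0 ≤ (x i - c i) / δ := fun i => div_nonneg (by linarith [(hx i).1]) hδ.le
    refine ⟨cube fun i => ⌊(x i - c i) / δ⌋₊, Finset.mem_image_of_mem _ ?_, fun i => ?_⟩
    · refine Fintype.mem_piFinset.2 fun i => Finset.mem_range.2 (Nat.lt_succ_of_le ?_)
      exact Nat.floor_le_floor (by gcongr; exact (hx i).2)
    · have hlo := (le_div_iff₀ hδ).1 (Nat.floor_le (hquot i))
      have hhi := (div_lt_iff₀ hδ).1 (Nat.lt_floor_add_one ((x i - c i) / δ))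
      constructor <;> linarith
  · simp only [Finset.mem_image]
    rintro _ ⟨v, -, rfl⟩
    exact ediam_box_le hδ.le fun i => by simp
  · calc ((Finset.image cube _).card : ℝ)
        ≤ (Fintype.piFinset fun i => Finset.range (⌊(b i - c i) / δ⌋₊ + 1)).card := by
          exact_mod_cast Finset.card_image_le
      _ = ∏ i, ((⌊(b i - c i) / δ⌋₊ : ℝ) + 1) := by simp [Fintype.card_piFinset]
      _ ≤ ∏ i, ((b i - c i) / δ + 1) := by
          refine Finset.prod_le_prod (fun i _ => by positivity) fun i _ => ?_
          gcongr
          exact Nat.floor_le (div_nonneg (sub_nonneg.2 (hcb i)) hδ.le)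

theorem box_diamCoverable_of_eq [Fintype ι] {c b : ι → ℝ} (hcb : c ≤ b) {i₀ : ι} (hi₀ : c i₀ = b i₀)
    {L δ : ℝ} (hL : ∀ i, b i - c i ≤ L) (hδ : 0 < δ) :
    DiamCoverable (box c b) (ENNReal.ofReal (δ * √(Fintype.card ι)))
      ((L / δ + 1) ^ (Fintype.card ι - 1)) := by
  classical
  refine (box_diamCoverable hcb hδ).mono subset_rfl le_rfl ?_
  have hfactor : ∀ i, 0 ≤ (b i - c i) / δ + 1 :=
    fun i => by have := div_nonneg (sub_nonneg.2 (hcb i)) hδ.le; linarith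
  rw [← Finset.mul_prod_erase _ _ (Finset.mem_univ i₀), hi₀, sub_self, zero_div, zero_add,
    one_mul]
  calc ∏ i ∈ Finset.univ.erase i₀, ((b i - c i) / δ + 1)
      ≤ ∏ _i ∈ Finset.univ.erase i₀, (L / δ + 1) :=
        Finset.prod_le_prod (fun i _ => hfactor i) fun i _ => by gcongr; exact hL i
    _ = (L / δ + 1) ^ (Fintype.card ι - 1) := by
        rw [Finset.prod_const, Finset.card_erase_of_mem (Finset.mem_univ _), Finset.card_univ]

theorem boxFaces_diamCoverable [Fintype ι] [DecidableEq ι] {c b : ι → ℝ} (hcb : c ≤ b) {L δ : ℝ}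
    (hL : ∀ i, b i - c i ≤ L) (hδ : 0 < δ) :
    DiamCoverable (boxFaces c b) (ENNReal.ofReal (δ * √(Fintype.card ι)))
      (2 * Fintype.card ι * (L / δ + 1) ^ (Fintype.card ι - 1)) := by
  have hface : ∀ i, DiamCoverable (box c (Function.update b i (c i)) ∪
      box (Function.update c i (b i)) b) (ENNReal.ofReal (δ * √(Fintype.card ι)))
      ((L / δ + 1) ^ (Fintype.card ι - 1) + (L / δ + 1) ^ (Fintype.card ι - 1)) := by
    intro i
    refine .union (box_diamCoverable_of_eq ?_ (i₀ := i) (by simp) (fun i' => ?_) hδ)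
      (box_diamCoverable_of_eq ?_ (i₀ := i) (by simp) (fun i' => ?_) hδ)
    · exact le_update_iff.2 ⟨le_rfl, fun j _ => hcb j⟩
    · rw [Function.update_apply]; split_ifs with h
      · subst h; linarith [hL i', hcb i']
      · exact hL i'
    · exact update_le_iff.2 ⟨le_rfl, fun j _ => hcb j⟩
    · rw [Function.update_apply]; split_ifs with h
      · subst h; linarith [hL i', hcb i']
      · exact hL i'
  have := DiamCoverable.biUnion Finset.univ fun i _ => hface i
  refine this.mono (by simp [boxFaces]) le_rfl (le_of_eq ?_)
  rw [Finset.sum_const, Finset.card_univ, nsmul_eq_mul]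
  ring

end Box

section Fractal

variable {n : ℕ} {α β : ℝ}

def baseLower (n : ℕ) : Fin (n + 1) → ℝ := fun i => if (i : ℕ) < n then 0 else -1

def baseUpper (n : ℕ) : Fin (n + 1) → ℝ := fun i => if (i : ℕ) < n then 1 else 0

noncomputable def rectLower (n : ℕ) (α β : ℝ) (m j : ℕ) : Fin (n + 1) → ℝ :=
  fun i => if i = 0 then fractalPoint β m j - fractalSpacing β m ^ α / 2 else 0

noncomputable def rectUpper (n : ℕ) (β : ℝ) (m j : ℕ) : Fin (n + 1) → ℝ :=
  fun i => if i = 0 then fractalPoint β m j else (2 : ℝ) ^ (-(m : ℝ))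

noncomputable def tailUpper (n M : ℕ) : Fin (n + 1) → ℝ :=
  fun i => if i = 0 then 2 * (2 : ℝ) ^ (-(M : ℝ)) else (2 : ℝ) ^ (-(M : ℝ))

theorem fractalBase_eq_box (n : ℕ) : fractalBase n = box (baseLower n) (baseUpper n) := by
  ext x
  constructor
  · rintro ⟨hfirst, hlast⟩ i
    by_cases hi : (i : ℕ) < n
    · simpa [baseLower, baseUpper, hi] using hfirst i hi
    · obtain rfl : i = Fin.last n := Fin.ext (by have := i.isLt; simp; omega)
      simpa [baseLower, baseUpper] using hlast
  · intro h
    exact ⟨fun i hi => by simpa [baseLower, baseUpper, hi] using h i,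
      by simpa [baseLower, baseUpper] using h (Fin.last n)⟩

theorem fractalRect_eq_box (n : ℕ) (α β : ℝ) (m j : ℕ) :
    fractalRect n α β m j = box (rectLower n α β m j) (rectUpper n β m j) := by
  ext x
  constructor
  · rintro ⟨h0, h⟩ i
    rcases eq_or_ne i 0 with rfl | hi
    · simpa [rectLower, rectUpper] using h0
    · simpa [rectLower, rectUpper, hi] using h i hi
  · intro h
    exact ⟨by simpa [rectLower, rectUpper] using h 0,
      fun i hi => by simpa [rectLower, rectUpper, hi] using h i⟩

theorem fractalSpacing_pos (β : ℝ) (m : ℕ) : 0 < fractalSpacing β m :=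
  Real.rpow_pos_of_pos two_pos _

theorem natCast_two_pow_floor_toNat (hβ : 0 ≤ β) (m : ℕ) :
    ((2 ^ ⌊(m : ℝ) * β⌋.toNat : ℕ) : ℝ) = (2 : ℝ) ^ (⌊(m : ℝ) * β⌋ : ℝ) := by
  have hfloor : 0 ≤ ⌊(m : ℝ) * β⌋ := Int.floor_nonneg.2 (by positivity)
  rw [← Int.toNat_of_nonneg hfloor, Int.cast_natCast, Real.rpow_natCast, Nat.cast_pow,
    Nat.cast_ofNat, Int.toNat_of_nonneg hfloor]

theorem fractalSpacing_le (hβ : 0 ≤ β) (m : ℕ) : fractalSpacing β m ≤ (2 : ℝ) ^ (-(m : ℝ)) :=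
  Real.rpow_le_rpow_of_exponent_le one_le_two <| by
    have : (0 : ℝ) ≤ ⌊(m : ℝ) * β⌋ := by exact_mod_cast Int.floor_nonneg.2 (by positivity)
    linarith

theorem fractalSpacing_rpow_le (hα : 1 ≤ α) (hβ : 0 ≤ β) (m : ℕ) :
    fractalSpacing β m ^ α ≤ fractalSpacing β m := by
  refine Real.rpow_le_self_of_le_one (fractalSpacing_pos β m).le ?_ hα
  exact (fractalSpacing_le hβ m).trans (Real.rpow_le_one_of_one_le_of_nonpos one_le_two (by simp))

theorem two_pow_floor_toNat_mul_fractalSpacing (hβ : 0 ≤ β) (m : ℕ) :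
    ((2 ^ ⌊(m : ℝ) * β⌋.toNat : ℕ) : ℝ) * fractalSpacing β m = (2 : ℝ) ^ (-(m : ℝ)) := by
  rw [natCast_two_pow_floor_toNat hβ, fractalSpacing, ← Real.rpow_add two_pos]
  ring_nf

theorem rectLower_le_rectUpper (n : ℕ) (α β : ℝ) (m j : ℕ) :
    rectLower n α β m j ≤ rectUpper n β m j := fun i => by
  have := Real.rpow_nonneg (fractalSpacing_pos β m).le α
  have := Real.rpow_nonneg zero_le_two (-(m : ℝ))
  unfold rectLower rectUpper
  split_ifs <;> linarith

theorem rectUpper_sub_rectLower_le (hα : 1 ≤ α) (hβ : 0 ≤ β) (m j : ℕ) (i : Fin (n + 1)) :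
    rectUpper n β m j i - rectLower n α β m j i ≤ (2 : ℝ) ^ (-(m : ℝ)) := by
  have := fractalSpacing_rpow_le hα hβ m
  have := fractalSpacing_le hβ m
  have := (fractalSpacing_pos β m).le
  unfold rectLower rectUpper
  split_ifs <;> linarith

theorem fractalRect_subset_tailBox (hα : 1 ≤ α) (hβ : 0 ≤ β) {M m j : ℕ} (hMm : M ≤ m)
    (hj₁ : 1 ≤ j) (hj : j ≤ 2 ^ ⌊(m : ℝ) * β⌋.toNat) :
    fractalRect n α β m j ⊆ box 0 (tailUpper n M) := by
  have hpow : (2 : ℝ) ^ (-(m : ℝ)) ≤ (2 : ℝ) ^ (-(M : ℝ)) :=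
    Real.rpow_le_rpow_of_exponent_le one_le_two (by simpa using hMm)
  have hjle : (j : ℝ) * fractalSpacing β m ≤ (2 : ℝ) ^ (-(m : ℝ)) := by
    rw [← two_pow_floor_toNat_mul_fractalSpacing hβ m]
    gcongr
    exact (fractalSpacing_pos β m).le
  have hjge : fractalSpacing β m ≤ (j : ℝ) * fractalSpacing β m :=
    le_mul_of_one_le_left (fractalSpacing_pos β m).le (by exact_mod_cast hj₁)
  have hwidth := fractalSpacing_rpow_le hα hβ m
  rw [fractalRect_eq_box]
  intro x hx i
  have hxi := hx i
  simp only [rectLower, rectUpper, fractalPoint, Set.mem_Icc] at hxi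
  simp only [tailUpper, Pi.zero_apply, Set.mem_Icc]
  split_ifs at hxi ⊢ <;> constructor <;> linarith [hxi.1, hxi.2]

theorem fractalRect_subset_fractalDomain {m j : ℕ} (hm : 1 ≤ m) (hj₁ : 1 ≤ j)
    (hj : j ≤ 2 ^ ⌊(m : ℝ) * β⌋.toNat) : fractalRect n α β m j ⊆ fractalDomain n α β :=
  fun x hx => Or.inr (by simp only [mem_iUnion]; exact ⟨m, hm, j, hj₁, hj, hx⟩)

theorem fractalDomain_subset (hα : 1 ≤ α) (hβ : 0 ≤ β) (M : ℕ) :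
    fractalDomain n α β ⊆ box (baseLower n) (baseUpper n) ∪ box 0 (tailUpper n M) ∪
      ⋃ m ∈ Finset.Ico 1 M, ⋃ j ∈ Finset.Icc 1 (2 ^ ⌊(m : ℝ) * β⌋.toNat),
        box (rectLower n α β m j) (rectUpper n β m j) := by
  rintro x (hx | hx)
  · exact Or.inl (Or.inl (fractalBase_eq_box n ▸ hx))
  simp only [mem_iUnion] at hx
  obtain ⟨m, hm, j, hj₁, hj, hxR⟩ := hx
  by_cases hmM : m < M
  · refine Or.inr (mem_iUnion₂.2 ⟨m, Finset.mem_Ico.2 ⟨hm, hmM⟩, mem_iUnion₂.2 ?_⟩)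
    exact ⟨j, Finset.mem_Icc.2 ⟨hj₁, hj⟩, fractalRect_eq_box n α β m j ▸ hxR⟩
  · exact Or.inl (Or.inr (fractalRect_subset_tailBox hα hβ (not_lt.1 hmM) hj₁ hj hxR))

theorem frontier_fractalDomain_subset (hα : 1 ≤ α) (hβ : 0 ≤ β) (M : ℕ) :
    frontier (fractalDomain n α β) ⊆
      boxFaces (baseLower n) (baseUpper n) ∪ box 0 (tailUpper n M) ∪
        ⋃ m ∈ Finset.Ico 1 M, ⋃ j ∈ Finset.Icc 1 (2 ^ ⌊(m : ℝ) * β⌋.toNat),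
          boxFaces (rectLower n α β m j) (rectUpper n β m j) := by
  have hclosed : IsClosed (box (baseLower n) (baseUpper n) ∪ box 0 (tailUpper n M) ∪
      ⋃ m ∈ Finset.Ico 1 M, ⋃ j ∈ Finset.Icc 1 (2 ^ ⌊(m : ℝ) * β⌋.toNat),
        box (rectLower n α β m j) (rectUpper n β m j)) :=
    ((isClosed_box _ _).union (isClosed_box _ _)).union <|
      (Finset.finite_toSet _).isClosed_biUnion fun m _ =>
        (Finset.finite_toSet _).isClosed_biUnion fun j _ => isClosed_box _ _
  intro x ⟨hx, hxT⟩
  rcases closure_minimal (fractalDomain_subset hα hβ M) hclosed hx with (hxQ | hxB) | hxR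
  · refine Or.inl (Or.inl (box_diff_interior_subset_boxFaces ?_ ⟨hxQ, hxT⟩))
    exact fractalBase_eq_box n ▸ subset_union_left
  · exact Or.inl (Or.inr hxB)
  · simp only [mem_iUnion, Finset.mem_Ico, Finset.mem_Icc, exists_prop] at hxR
    obtain ⟨m, hm, j, hj, hxR⟩ := hxR
    refine Or.inr (mem_iUnion₂.2 ⟨m, Finset.mem_Ico.2 hm, mem_iUnion₂.2
      ⟨j, Finset.mem_Icc.2 hj, box_diff_interior_subset_boxFaces ?_ ⟨hxR, hxT⟩⟩⟩)
    rw [← fractalRect_eq_box]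
    exact fractalRect_subset_fractalDomain hm.1 hj.1 hj.2

theorem baseLower_le_baseUpper (n : ℕ) : baseLower n ≤ baseUpper n := fun i => by
  unfold baseLower baseUpper; split_ifs <;> norm_num

theorem baseUpper_sub_baseLower (n : ℕ) (i : Fin (n + 1)) : baseUpper n i - baseLower n i = 1 := by
  unfold baseLower baseUpper; split_ifs <;> norm_num

theorem tailBox_diamCoverable (n M : ℕ) {δ : ℝ} (hδ : 0 < δ) :
    DiamCoverable (box 0 (tailUpper n M)) (ENNReal.ofReal (δ * √(n + 1)))
      ((2 * (2 : ℝ) ^ (-(M : ℝ)) / δ + 1) ^ (n + 1)) := by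
  have hpow := Real.rpow_nonneg zero_le_two (-(M : ℝ))
  have hcorner : ∀ i, 0 ≤ tailUpper n M i ∧ tailUpper n M i ≤ 2 * (2 : ℝ) ^ (-(M : ℝ)) :=
    fun i => by unfold tailUpper; split_ifs <;> constructor <;> linarith
  refine (box_diamCoverable (fun i => (hcorner i).1) hδ).mono subset_rfl (by simp) ?_
  calc ∏ i, ((tailUpper n M i - 0) / δ + 1)
      ≤ ∏ _i : Fin (n + 1), (2 * (2 : ℝ) ^ (-(M : ℝ)) / δ + 1) := by
        refine Finset.prod_le_prod (fun i _ => ?_) fun i _ => ?_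
        · have := div_nonneg (hcorner i).1 hδ.le; rw [sub_zero]; linarith
        · rw [sub_zero]; gcongr; exact (hcorner i).2
    _ = _ := by simp

theorem frontier_fractalDomain_diamCoverable (hα : 1 ≤ α) (hβ : 0 ≤ β) (M : ℕ) {δ : ℝ}
    (hδ : 0 < δ) :
    DiamCoverable (frontier (fractalDomain n α β)) (ENNReal.ofReal (δ * √(n + 1)))
      (2 * (n + 1) * (1 / δ + 1) ^ n + (2 * (2 : ℝ) ^ (-(M : ℝ)) / δ + 1) ^ (n + 1) +
        ∑ m ∈ Finset.Ico 1 M, ((2 ^ ⌊(m : ℝ) * β⌋.toNat : ℕ) : ℝ) *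
          (2 * (n + 1) * ((2 : ℝ) ^ (-(m : ℝ)) / δ + 1) ^ n)) := by
  have hQ := boxFaces_diamCoverable (baseLower_le_baseUpper n) (L := 1)
    (fun i => (baseUpper_sub_baseLower n i).le) hδ
  have hR := DiamCoverable.biUnion (Finset.Ico 1 M) fun m _ =>
    DiamCoverable.biUnion (Finset.Icc 1 (2 ^ ⌊(m : ℝ) * β⌋.toNat)) fun j _ =>
      boxFaces_diamCoverable (rectLower_le_rectUpper n α β m j)
        (rectUpper_sub_rectLower_le hα hβ m j) hδ
  simp only [Fintype.card_fin, Nat.add_sub_cancel, Nat.cast_add, Nat.cast_one,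
    Finset.sum_const, Nat.card_Icc, nsmul_eq_mul] at hQ hR
  exact ((hQ.union (tailBox_diamCoverable n M hδ)).union hR).mono
    (frontier_fractalDomain_subset hα hβ M) le_rfl (by simp)

end Fractal

section Counting

theorem mul_add_one_pow_le {s X Y : ℝ} (hs : 0 ≤ s) (hY : 0 ≤ Y) (hYX : Y ≤ X) (hX : 1 ≤ X)
    (p : ℕ) : (s * Y + 1) ^ p ≤ (s + 1) ^ p * X ^ p := by
  rw [← mul_pow]
  gcongr
  nlinarith

theorem two_rpow_neg_div (s u v : ℝ) : (2 : ℝ) ^ (-v) / ((2 : ℝ) ^ (-u) / s) = s * 2 ^ (u - v) := by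
  rw [Real.rpow_sub two_pos, Real.rpow_neg zero_le_two, Real.rpow_neg zero_le_two]
  field_simp

noncomputable def coveringExponent (n : ℕ) (β : ℝ) (k : ℕ) : ℝ :=
  ((n : ℝ) + 1) * (k : ℝ) * β / (β + 1)

noncomputable def cutoff (β : ℝ) (k : ℕ) : ℕ := ⌈(k : ℝ) / (β + 1)⌉₊ + 1

variable {n : ℕ} {β s : ℝ}

theorem natCast_mul_le_coveringExponent (hβ : (n : ℝ) ≤ β) (k : ℕ) :
    (k : ℝ) * n ≤ coveringExponent n β k := by
  have : (0 : ℝ) ≤ k := k.cast_nonneg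
  rw [coveringExponent, le_div_iff₀ (by linarith)]
  nlinarith

theorem sub_cutoff_le (hβ : 0 ≤ β) (k : ℕ) : (k : ℝ) - cutoff β k ≤ k * β / (β + 1) := by
  have hceil := Nat.le_ceil ((k : ℝ) / (β + 1))
  have : (k : ℝ) * β / (β + 1) = k - k / (β + 1) := by field_simp; ring
  rw [this, cutoff]
  push_cast
  linarith

theorem le_of_lt_cutoff (hβ : 0 ≤ β) {k m : ℕ} (hm : m < cutoff β k) :
    (m : ℝ) ≤ k / (β + 1) + 1 ∧ m ≤ k := by
  have hm' : m ≤ ⌈(k : ℝ) / (β + 1)⌉₊ := Nat.lt_succ_iff.1 hm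
  have hceil := Nat.ceil_lt_add_one (show (0 : ℝ) ≤ k / (β + 1) by positivity)
  refine ⟨by linarith [(Nat.cast_le (α := ℝ)).2 hm'], hm'.trans (Nat.ceil_le.2 ?_)⟩
  exact div_le_self k.cast_nonneg (by linarith)

theorem tooth_exponent_le (hβ : (n : ℝ) ≤ β) {k m : ℕ} (hm : (m : ℝ) ≤ k / (β + 1) + 1) :
    m * β + (k - m) * n ≤ coveringExponent n β k + (β - n) := by
  have hβ1 : 0 < β + 1 := by linarith [n.cast_nonneg (α := ℝ)]
  have hsplit : coveringExponent n β k = k * n + k * (β - n) / (β + 1) := by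
    rw [coveringExponent]; field_simp; ring
  have := mul_le_mul_of_nonneg_right hm (sub_nonneg.2 hβ)
  rw [hsplit]
  have : (k / (β + 1) + 1) * (β - n) = k * (β - n) / (β + 1) + (β - n) := by field_simp
  nlinarith

theorem base_count_le (hβ : (n : ℝ) ≤ β) (k : ℕ) (hs : 0 ≤ s) :
    (1 / ((2 : ℝ) ^ (-(k : ℝ)) / s) + 1) ^ n ≤ (s + 1) ^ n * 2 ^ coveringExponent n β k := by
  have h2k : (1 : ℝ) ≤ 2 ^ (k : ℝ) := Real.one_le_rpow one_le_two k.cast_nonneg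
  rw [one_div_div, Real.rpow_neg zero_le_two, div_inv_eq_mul]
  calc (s * 2 ^ (k : ℝ) + 1) ^ n ≤ (s + 1) ^ n * ((2 : ℝ) ^ (k : ℝ)) ^ n :=
        mul_add_one_pow_le hs (by positivity) le_rfl h2k n
    _ ≤ (s + 1) ^ n * 2 ^ coveringExponent n β k := by
        rw [← Real.rpow_mul_natCast zero_le_two]
        gcongr
        · exact one_le_two
        · exact natCast_mul_le_coveringExponent hβ k

theorem tail_count_le (hβ : 0 ≤ β) (k : ℕ) (hs : 0 ≤ s) :
    (2 * (2 : ℝ) ^ (-(cutoff β k : ℝ)) / ((2 : ℝ) ^ (-(k : ℝ)) / s) + 1) ^ (n + 1) ≤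
      (2 * s + 1) ^ (n + 1) * 2 ^ coveringExponent n β k := by
  have hX : (1 : ℝ) ≤ 2 ^ ((k : ℝ) * β / (β + 1)) := Real.one_le_rpow one_le_two (by positivity)
  have hYX : (2 : ℝ) ^ ((k : ℝ) - cutoff β k) ≤ 2 ^ ((k : ℝ) * β / (β + 1)) :=
    Real.rpow_le_rpow_of_exponent_le one_le_two (sub_cutoff_le hβ k)
  have hP : coveringExponent n β k = (k : ℝ) * β / (β + 1) * (n + 1 : ℕ) := by
    rw [coveringExponent]; push_cast; ring
  rw [mul_div_assoc, two_rpow_neg_div, ← mul_assoc, hP, Real.rpow_mul_natCast zero_le_two]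
  exact mul_add_one_pow_le (by positivity) (by positivity) hYX hX (n + 1)

theorem tooth_count_le (hβ : (n : ℝ) ≤ β) {k m : ℕ} (hm : m < cutoff β k) (hs : 0 ≤ s) :
    ((2 ^ ⌊(m : ℝ) * β⌋.toNat : ℕ) : ℝ) *
        (2 * (n + 1) * ((2 : ℝ) ^ (-(m : ℝ)) / ((2 : ℝ) ^ (-(k : ℝ)) / s) + 1) ^ n) ≤
      2 * (n + 1) * (s + 1) ^ n * 2 ^ (β - n) * 2 ^ coveringExponent n β k := by
  have hβ0 : 0 ≤ β := le_trans n.cast_nonneg hβ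
  obtain ⟨hm_le, hmk⟩ := le_of_lt_cutoff hβ0 hm
  have hX : (1 : ℝ) ≤ 2 ^ ((k : ℝ) - m) :=
    Real.one_le_rpow one_le_two (sub_nonneg.2 (by exact_mod_cast hmk))
  have hteeth : ((2 ^ ⌊(m : ℝ) * β⌋.toNat : ℕ) : ℝ) ≤ 2 ^ ((m : ℝ) * β) := by
    rw [natCast_two_pow_floor_toNat hβ0]
    exact Real.rpow_le_rpow_of_exponent_le one_le_two (Int.floor_le _)
  have hcubes : ((2 : ℝ) ^ (-(m : ℝ)) / ((2 : ℝ) ^ (-(k : ℝ)) / s) + 1) ^ n ≤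
      (s + 1) ^ n * 2 ^ (((k : ℝ) - m) * n) := by
    rw [two_rpow_neg_div, Real.rpow_mul_natCast zero_le_two]
    exact mul_add_one_pow_le hs (by positivity) le_rfl hX n
  calc ((2 ^ ⌊(m : ℝ) * β⌋.toNat : ℕ) : ℝ) *
        (2 * (n + 1) * ((2 : ℝ) ^ (-(m : ℝ)) / ((2 : ℝ) ^ (-(k : ℝ)) / s) + 1) ^ n)
      ≤ 2 ^ ((m : ℝ) * β) * (2 * (n + 1) * ((s + 1) ^ n * 2 ^ (((k : ℝ) - m) * n))) := by
        gcongr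
    _ = 2 * (n + 1) * (s + 1) ^ n * 2 ^ ((m : ℝ) * β + ((k : ℝ) - m) * n) := by
        rw [Real.rpow_add two_pos]; ring
    _ ≤ 2 * (n + 1) * (s + 1) ^ n * 2 ^ (coveringExponent n β k + (β - n)) :=
        mul_le_mul_of_nonneg_left
          (Real.rpow_le_rpow_of_exponent_le one_le_two (tooth_exponent_le hβ hm_le))
          (by positivity)
    _ = 2 * (n + 1) * (s + 1) ^ n * 2 ^ (β - n) * 2 ^ coveringExponent n β k := by
        rw [Real.rpow_add two_pos]; ring

theorem card_Ico_one_cutoff_le (hβ : 0 ≤ β) (k : ℕ) : (Finset.Ico 1 (cutoff β k)).card ≤ k := by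
  rw [Nat.card_Ico, cutoff, Nat.add_sub_cancel, Nat.ceil_le]
  exact div_le_self k.cast_nonneg (by linarith)

end Counting

theorem fractal_boundary_covering_upper_bound_general
    (n : ℕ) (α β : ℝ) (hα : 1 ≤ α) (hβ : (n : ℝ) ≤ β) :
    ∃ a c : ℝ, 0 < a ∧ 0 < c ∧
      ∀ k : ℕ, 1 ≤ k →
        ∃ F : Finset (Set (EuclideanSpace ℝ (Fin (n + 1)))),
          frontier (fractalDomain n α β) ⊆
            ⋃₀ (F : Set (Set (EuclideanSpace ℝ (Fin (n + 1))))) ∧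
          (∀ U ∈ F, EMetric.diam U ≤ ENNReal.ofReal ((2 : ℝ) ^ (-(k : ℝ)))) ∧
          (F.card : ℝ) ≤ (a * (k : ℝ) + c) *
            (2 : ℝ) ^ (((n : ℝ) + 1) * (k : ℝ) * β / (β + 1)) := by
  have hβ0 : 0 ≤ β := le_trans n.cast_nonneg hβ
  set s := √((n : ℝ) + 1)
  have hs : 0 < s := Real.sqrt_pos.2 (by positivity)
  refine ⟨2 * (n + 1) * (s + 1) ^ n * 2 ^ (β - n),
    2 * (n + 1) * (s + 1) ^ n + (2 * s + 1) ^ (n + 1), by positivity, by positivity, fun k _ => ?_⟩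
  set P := coveringExponent n β k with hP
  have hδ : 0 < (2 : ℝ) ^ (-(k : ℝ)) / s := by positivity
  refine (frontier_fractalDomain_diamCoverable hα hβ0 (cutoff β k) hδ).mono subset_rfl
    (by rw [div_mul_cancel₀ _ hs.ne']) ?_
  calc _ ≤ 2 * (n + 1) * ((s + 1) ^ n * 2 ^ P) + (2 * s + 1) ^ (n + 1) * 2 ^ P +
        ∑ _m ∈ Finset.Ico 1 (cutoff β k), 2 * (n + 1) * (s + 1) ^ n * 2 ^ (β - n) * 2 ^ P := by
        gcongr ?_ + ?_ + ?_
        · exact mul_le_mul_of_nonneg_left (base_count_le hβ k hs.le) (by positivity)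
        · exact tail_count_le hβ0 k hs.le
        · exact Finset.sum_le_sum fun m hm => tooth_count_le hβ (Finset.mem_Ico.1 hm).2 hs.le
    _ ≤ 2 * (n + 1) * ((s + 1) ^ n * 2 ^ P) + (2 * s + 1) ^ (n + 1) * 2 ^ P +
        k * (2 * (n + 1) * (s + 1) ^ n * 2 ^ (β - n) * 2 ^ P) := by
        rw [Finset.sum_const, nsmul_eq_mul]
        gcongr
        exact_mod_cast card_Ico_one_cutoff_le hβ0 k
    _ = _ := by rw [hP, coveringExponent]; ring

/-- there are constants `a, c > 0` such that for every `k ≥ 1`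
the hypersurface `S_{α,β} = ∂T_{α,β}` can be covered by at most
`(a·k + c)·2^{(n+1)kβ/(β+1)}` sets of diameter at most `2^{-k}`. -/
theorem fractal_boundary_covering_upper_bound
    (n : ℕ) (hn : 1 ≤ n) (α β : ℝ) (hα : 1 ≤ α) (hβ : (n : ℝ) ≤ β) :
    ∃ a c : ℝ, 0 < a ∧ 0 < c ∧
      ∀ k : ℕ, 1 ≤ k →
        ∃ F : Finset (Set (EuclideanSpace ℝ (Fin (n + 1)))),
          frontier (fractalDomain n α β) ⊆
            ⋃₀ (F : Set (Set (EuclideanSpace ℝ (Fin (n + 1))))) ∧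
          (∀ U ∈ F, EMetric.diam U ≤ ENNReal.ofReal ((2 : ℝ) ^ (-(k : ℝ)))) ∧
          (F.card : ℝ) ≤ (a * (k : ℝ) + c) *
            (2 : ℝ) ^ (((n : ℝ) + 1) * (k : ℝ) * β / (β + 1)) :=
  fractal_boundary_covering_upper_bound_general n α β hα hβ
end
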